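/- For any azimuth az, elevation el, and tilt angle t, the pair of direction cosines (u, v) given by u = cos(el)·sin(az) and v = sin(el)·cos(t) − sin(t)·cos(az)·cos(el) lies in the closed disk of radius 1 centered at the origin of ℝ², i.e. u² + v² ≤ 1. -/
import Mathlib

/-- The pair of direction cosines `(u, v)` lies in the closed unit disk of `ℝ²`. -/
theorem direction_cosines_in_unit_disk (az el t : ℝ) :
    (Real.cos el * Real.sin az) ^ 2 +
      (Real.sin el * Real.cos t - Real.sin t * Real.cos az * Real.cos el) ^ 2 ≤ 1 := by
  have ha := Real.sin_sq_add_cos_sq az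
  have he := Real.sin_sq_add_cos_sq el
  have ht := Real.sin_sq_add_cos_sq t
  have key : (Real.cos el * Real.sin az) ^ 2 +
      (Real.sin el * Real.cos t - Real.sin t * Real.cos az * Real.cos el) ^ 2 +
      (Real.sin el * Real.sin t + Real.cos t * Real.cos az * Real.cos el) ^ 2 = 1 := by
    linear_combination ((Real.sin el)^2 + (Real.cos az * Real.cos el)^2) * ht +
      (Real.cos el)^2 * ha + he
  nlinarith [sq_nonneg (Real.sin el * Real.sin t + Real.cos t * Real.cos az * Real.cos el)]
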